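/- Let P be a range-overlapping 0-1 matrix and k ≥ 1. Then for all m and n, ex(m, n, P) ≤ k·(ex_k(m, P) + n). -/

import Mathlib

/-- `A` contains the 0-1 pattern `P`. -/
def Contains {a b m n : ℕ} (P : Matrix (Fin a) (Fin b) Bool)
    (A : Matrix (Fin m) (Fin n) Bool) : Prop :=
  ∃ (ri : Fin a → Fin m) (ci : Fin b → Fin n),
    StrictMono ri ∧ StrictMono ci ∧
      ∀ i j, P i j = true → A (ri i) (ci j) = true

/-- Total number of ones in `A`. -/
def onesCount {m n : ℕ} (A : Matrix (Fin m) (Fin n) Bool) : ℕ :=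
  (Finset.univ.filter fun p : Fin m × Fin n => A p.1 p.2 = true).card

/-- Number of ones in column `j` of `A`. -/
def colOnes {m n : ℕ} (A : Matrix (Fin m) (Fin n) Bool) (j : Fin n) : ℕ :=
  (Finset.univ.filter fun i : Fin m => A i j = true).card

/-- `ex(m, n, P)`: maximum number of ones in an `m × n` 0-1 matrix avoiding `P`. -/
noncomputable def exWeight {a b : ℕ} (m n : ℕ) (P : Matrix (Fin a) (Fin b) Bool) : ℕ :=
  sSup {w : ℕ | ∃ A : Matrix (Fin m) (Fin n) Bool, ¬ Contains P A ∧ onesCount A = w}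

/-- `ex_k(m, P)` as a supremum in `ℕ∞`. -/
noncomputable def exCols {a b : ℕ} (k m : ℕ) (P : Matrix (Fin a) (Fin b) Bool) : ℕ∞ :=
  sSup {x : ℕ∞ | ∃ n : ℕ, x = (n : ℕ∞) ∧ ∃ A : Matrix (Fin m) (Fin n) Bool,
    ¬ Contains P A ∧ ∀ col, k ≤ colOnes A col}

/-- Row `i` lies in the range of column `j` of `P`, i.e. between the topmost and
bottommost ones of that column. -/
def InRange {a b : ℕ} (P : Matrix (Fin a) (Fin b) Bool) (j : Fin b) (i : Fin a) : Prop :=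
  (∃ i1, i1 ≤ i ∧ P i1 j = true) ∧ (∃ i2, i ≤ i2 ∧ P i2 j = true)

/-- `P` is range-overlapping: every pair of columns has a common row in both ranges. -/
def RangeOverlapping {a b : ℕ} (P : Matrix (Fin a) (Fin b) Bool) : Prop :=
  ∀ j j' : Fin b, ∃ i : Fin a, InRange P j i ∧ InRange P j' i

/-!
Cut every column of an `m × n` matrix `A` avoiding `P` into blocks of `k` consecutive ones,
discarding the fewer than `k` ones left over, and give each block its own column, keeping the
blocks in lexicographic order. At most `k - 1` ones per column are lost, so
`ones(A) ≤ k · (#blocks + n)`, and the block matrix has at least `k` ones in each column. It still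
avoids `P`: two columns of a copy of `P` cannot come from blocks of the same column of `A`, since
all ones of the earlier block lie strictly above those of the later one while the ranges of the
two columns of `P` share a row. So a copy of `P` in the block matrix projects to a copy in `A`.
-/

open Finset

lemma Finset.strictMonoOn_card_filter_lt {α : Type*} [LinearOrder α] (s : Finset α) :
    StrictMonoOn (fun x => #{y ∈ s | y < x}) s := by
  intro x hx x' _ hlt
  refine card_lt_card <| (ssubset_iff_of_subset ?_).mpr ⟨x, ?_, ?_⟩
  · exact monotone_filter_right s fun y _ hy => hy.trans hlt
  · exact mem_filter.mpr ⟨hx, hlt⟩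
  · simp

lemma Finset.image_card_filter_lt {α : Type*} [LinearOrder α] (s : Finset α) :
    s.image (fun x => #{y ∈ s | y < x}) = range #s := by
  refine eq_of_subset_of_card_le (fun r hr => ?_) ?_
  · obtain ⟨x, hx, rfl⟩ := mem_image.mp hr
    exact mem_range.mpr <| card_lt_card <| filter_ssubset.mpr ⟨x, hx, lt_irrefl x⟩
  · rw [card_range, card_image_of_injOn s.strictMonoOn_card_filter_lt.injOn]

lemma Finset.le_card_filter_card_filter_lt_div_eq {α : Type*} [LinearOrder α] (s : Finset α)
    {k t : ℕ} (h : (t + 1) * k ≤ #s) : k ≤ #{x ∈ s | #{y ∈ s | y < x} / k = t} := by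
  have hIco : Ico (t * k) ((t + 1) * k) ⊆
      image (fun x => #{y ∈ s | y < x}) {x ∈ s | #{y ∈ s | y < x} / k = t} := by
    intro r hr
    obtain ⟨hlo, hhi⟩ := mem_Ico.mp hr
    obtain ⟨x, hx, rfl⟩ := mem_image.mp <|
      s.image_card_filter_lt ▸ mem_range.mpr (hhi.trans_le h)
    exact mem_image_of_mem _ (mem_filter.mpr ⟨hx, Nat.div_eq_of_lt_le hlo hhi⟩)
  calc k = #(Ico (t * k) ((t + 1) * k)) := by simp [add_mul]
    _ ≤ _ := card_le_card hIco
    _ ≤ _ := card_image_le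

lemma Sigma.Lex.fst_le_fst {ι : Type*} [Preorder ι] {α : ι → Type*} [∀ i, LE (α i)]
    {a b : Σₗ i, α i} (h : a ≤ b) : a.1 ≤ b.1 := by
  rcases Sigma.Lex.le_def.mp h with h | ⟨h, -⟩
  exacts [h.le, h.le]

lemma Sigma.Lex.val_snd_lt_val_snd {ι : Type*} [Preorder ι] {q : ι → ℕ}
    {a b : Σₗ i, Fin (q i)} (h : a < b) (hfst : a.1 = b.1) : (a.2 : ℕ) < b.2 := by
  obtain ⟨i, x⟩ := a
  obtain ⟨j, y⟩ := b
  obtain rfl : i = j := hfst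
  rcases Sigma.Lex.lt_def.mp h with hi | ⟨_, hxy⟩
  exacts [absurd hi (lt_irrefl i), hxy]

theorem RangeOverlapping.contains_of_contains_split {a b m n N : ℕ}
    {P : Matrix (Fin a) (Fin b) Bool} (hP : RangeOverlapping P)
    {A : Matrix (Fin m) (Fin n) Bool} {B : Matrix (Fin m) (Fin N) Bool}
    (π : Fin N → Fin n) (hπ : Monotone π) (hBA : ∀ i c, B i c = true → A i (π c) = true)
    (hsep : ∀ ⦃c c'⦄, c < c' → π c = π c' →
      ∀ ⦃i i'⦄, B i c = true → B i' c' = true → i < i')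
    (hB : Contains P B) : Contains P A := by
  obtain ⟨ri, ci, hri, hci, hPB⟩ := hB
  refine ⟨ri, π ∘ ci, hri, (hπ.comp hci.monotone).strictMono_of_injective ?_,
    fun i j h => hBA _ _ (hPB i j h)⟩
  intro j j' hjj'
  by_contra hne
  wlog hlt : j < j' generalizing j j'
  · exact this hjj'.symm (Ne.symm hne) ((not_lt.mp hlt).lt_of_ne (Ne.symm hne))
  obtain ⟨i, ⟨-, ⟨i₂, hi₂, hP₂⟩⟩, ⟨⟨i₁, hi₁, hP₁⟩, -⟩⟩ := hP j j'
  exact (hri.monotone (hi₁.trans hi₂)).not_gt (hsep (hci hlt) hjj' (hPB _ _ hP₂) (hPB _ _ hP₁))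

def colSupport {m n : ℕ} (A : Matrix (Fin m) (Fin n) Bool) (j : Fin n) : Finset (Fin m) :=
  {i | A i j = true}

/-- Column `⟨j, t⟩` holds the `t`-th block of `k` consecutive ones of column `j` of `A`
(`#{i' ∈ colSupport A j | i' < i}` is the position of row `i` among them); the fewer than `k`
ones left over at the bottom of column `j` are dropped. -/
def splitCols {m n : ℕ} (A : Matrix (Fin m) (Fin n) Bool) (k : ℕ) :
    Matrix (Fin m) (Σₗ j : Fin n, Fin (colOnes A j / k)) Bool :=
  fun i c => decide (i ∈ colSupport A c.1 ∧ #{i' ∈ colSupport A c.1 | i' < i} / k = c.2)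

section splitCols

variable {m n : ℕ} (A : Matrix (Fin m) (Fin n) Bool) (k : ℕ)

lemma apply_of_splitCols_apply {i : Fin m} {c : Σₗ j : Fin n, Fin (colOnes A j / k)}
    (h : splitCols A k i c = true) : A i c.1 = true := by
  simpa [colSupport] using (of_decide_eq_true h).1

lemma le_card_filter_splitCols (c : Σₗ j : Fin n, Fin (colOnes A j / k)) :
    k ≤ #{i | splitCols A k i c = true} := by
  have hblock : ((c.2 : ℕ) + 1) * k ≤ #(colSupport A c.1) :=
    (Nat.mul_le_mul_right k c.2.isLt).trans (Nat.div_mul_le_self _ _)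
  convert (colSupport A c.1).le_card_filter_card_filter_lt_div_eq hblock using 2
  ext i
  simp only [splitCols, mem_filter, mem_univ, true_and, decide_eq_true_eq]

lemma lt_of_splitCols_apply {i i' : Fin m} {c c' : Σₗ j : Fin n, Fin (colOnes A j / k)}
    (hc : c < c') (hfst : c.1 = c'.1) (hi : splitCols A k i c = true)
    (hi' : splitCols A k i' c' = true) : i < i' := by
  obtain ⟨-, hrank⟩ := of_decide_eq_true hi
  obtain ⟨-, hrank'⟩ := of_decide_eq_true hi'
  by_contra! hle
  have hrank_le : #{x ∈ colSupport A c'.1 | x < i'} ≤ #{x ∈ colSupport A c.1 | x < i} := by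
    rw [hfst]
    exact card_le_card (monotone_filter_right _ fun _ _ h => h.trans_le hle)
  have := Nat.div_le_div_right (c := k) hrank_le
  have := Sigma.Lex.val_snd_lt_val_snd hc hfst
  omega

end splitCols

theorem RangeOverlapping.exists_split_not_contains {a b m n : ℕ}
    {P : Matrix (Fin a) (Fin b) Bool} (hP : RangeOverlapping P)
    {A : Matrix (Fin m) (Fin n) Bool} (hA : ¬ Contains P A) (k : ℕ) :
    ∃ B : Matrix (Fin m) (Fin (∑ j, colOnes A j / k)) Bool,
      ¬ Contains P B ∧ ∀ c, k ≤ colOnes B c := by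
  let e := Fintype.orderIsoFinOfCardEq (Σₗ j : Fin n, Fin (colOnes A j / k))
    (k := ∑ j, colOnes A j / k) (by simp [Fintype.card_lex])
  refine ⟨(splitCols A k).submatrix id e, fun hB => hA ?_,
    fun c => le_card_filter_splitCols A k (e c)⟩
  exact hP.contains_of_contains_split (fun c => (e c).1)
    (fun _ _ h => Sigma.Lex.fst_le_fst (e.monotone h))
    (fun _ _ h => apply_of_splitCols_apply A k h)
    (fun _ _ h hfst _ _ => lt_of_splitCols_apply A k (e.strictMono h) hfst) hB

lemma onesCount_eq_sum_colOnes {m n : ℕ} (A : Matrix (Fin m) (Fin n) Bool) :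
    onesCount A = ∑ j, colOnes A j := by
  rw [onesCount, card_filter, Fintype.sum_prod_type_right]
  simp only [colOnes, card_filter]

lemma onesCount_le_mul {m n k : ℕ} (A : Matrix (Fin m) (Fin n) Bool) (hk : 0 < k) :
    onesCount A ≤ k * (∑ j, colOnes A j / k + n) := by
  calc onesCount A = ∑ j, colOnes A j := onesCount_eq_sum_colOnes A
    _ ≤ ∑ j, (colOnes A j / k * k + k) := sum_le_sum fun j _ => (Nat.lt_div_mul_add hk).le
    _ = k * (∑ j, colOnes A j / k + n) := by
      rw [sum_add_distrib, ← sum_mul]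
      simp only [sum_const, card_univ, Fintype.card_fin, smul_eq_mul]
      ring

theorem RangeOverlapping.onesCount_le {a b m n k : ℕ} {P : Matrix (Fin a) (Fin b) Bool}
    (hP : RangeOverlapping P) (hk : 0 < k) {A : Matrix (Fin m) (Fin n) Bool}
    (hA : ¬ Contains P A) : (onesCount A : ℕ∞) ≤ k * (exCols k m P + n) := by
  obtain ⟨B, hB, hcols⟩ := hP.exists_split_not_contains hA k
  calc (onesCount A : ℕ∞) ≤ k * ((∑ j, colOnes A j / k : ℕ) + n) := by
        exact_mod_cast onesCount_le_mul A hk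
    _ ≤ k * (exCols k m P + n) := by
        gcongr
        exact le_sSup ⟨_, rfl, B, hB, hcols⟩

/-- For any range-overlapping `P` and `k ≥ 1`, `ex(m, n, P) ≤ k·(ex_k(m, P) + n)`. -/
theorem stmt_7 {a b : ℕ} (P : Matrix (Fin a) (Fin b) Bool) (hP : RangeOverlapping P)
    (k : ℕ) (hk : 1 ≤ k) (m n : ℕ) :
    ((exWeight m n P : ℕ) : ℕ∞) ≤ (k : ℕ∞) * (exCols k m P + (n : ℕ∞)) := by
  have hbdd : BddAbove {w | ∃ A : Matrix (Fin m) (Fin n) Bool, ¬ Contains P A ∧ onesCount A = w} :=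
    ⟨m * n, by
      rintro _ ⟨A, -, rfl⟩
      exact (card_filter_le _ _).trans_eq (by simp)⟩
  rw [exWeight, ENat.natCast_sSup hbdd]
  exact iSup₂_le fun _ ⟨_, hA, hw⟩ => hw ▸ hP.onesCount_le hk hA
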